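/- There exists no orthogonal array OA(96, 11, 2, 4); that is, there is no 96×11 matrix with entries in {0,1} such that in every selection of 4 columns, each of the 16 binary 4-tuples occurs exactly 6 times as a row of the selected 96×4 submatrix. -/

import Mathlib

/-
Encode a row `x` by the characters `χ_S(x) = ∏ i ∈ S, (-1) ^ x i` and let `c_S` be the sum of
`χ_S` over the rows. Strength 4 forces `c_S = 0` for `1 ≤ |S| ≤ 4` and fixes the first four
binomial moments of the distances from any row to all rows. Delsarte's linear programming bound,
with an explicit dual certificate, then gives `c_univ ^ 2 ≥ 3072`, i.e. `|c_univ| ≥ 56`. A second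
polynomial certificate bounds `χ_univ(r) * c_univ ≥ -25` for every row `r`, so all rows have the
same parity and all distances are even. Finally, a quartic that is divisible by 384 at every even
distance has row moment 2160, which 384 does not divide.
-/

/-- `A` (a multiset of rows, indexed by a finite type `R`, of vectors in `{0,1}^n`) is a
binary orthogonal array of strength `t` and index `lam`: for every selection of `t`
distinct columns, every binary `t`-tuple occurs exactly `lam` times among the rows
restricted to those columns. An `OA(N, n, 2, t)` is such an array with `N` rows and
index `lam = N / 2 ^ t`. -/
def IsOA {R : Type} [Fintype R] {n : ℕ} (t lam : ℕ) (A : R → Fin n → Fin 2) : Prop :=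
  ∀ c : Fin t → Fin n, Function.Injective c → ∀ v : Fin t → Fin 2,
    (Finset.univ.filter fun r => ∀ i, A r (c i) = v i).card = lam

open Finset

theorem sum_add_sub_le_sum_of_le {ι M : Type*} [Fintype ι] [AddCommGroup M] [PartialOrder M]
    [IsOrderedAddMonoid M] {f g : ι → M} (h : ∀ i, f i ≤ g i) (i : ι) :
    ∑ j, f j + (g i - f i) ≤ ∑ j, g j := by
  have hsingle := single_le_sum (fun j _ => sub_nonneg.2 (h j)) (mem_univ i)
  rwa [sum_sub_distrib, le_sub_iff_add_le'] at hsingle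

namespace OrthogonalArray

def toSign (a : Fin 2) : ℤ := (-1) ^ (a : ℕ)

/-- The Walsh–Fourier coefficient at `S` of the multiset of rows of `A`. -/
def charSum {R : Type} [Fintype R] {n : ℕ} (A : R → Fin n → Fin 2) (S : Finset (Fin n)) : ℤ :=
  ∑ r, ∏ i ∈ S, toSign (A r i)

def parity {n : ℕ} (x : Fin n → Fin 2) : ℤ := ∏ i, toSign (x i)

/-- The generating function `∑ k, K_k(w) c ^ k` of the Krawtchouk polynomials. -/
def krawtchoukGen (n : ℕ) (c : ℤ) (w : ℕ) : ℤ := (1 + c) ^ (n - w) * (1 - c) ^ w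

def binomialSum {m : ℕ} (a : Fin m → ℤ) (w : ℕ) : ℤ := ∑ k, a k * w.choose k

variable {n : ℕ}

theorem toSign_mul_toSign (a b : Fin 2) : toSign a * toSign b = if a = b then 1 else -1 := by
  fin_cases a <;> fin_cases b <;> rfl

theorem toSign_eq_one_add (a : Fin 2) : toSign a = 1 + -2 * if a = 1 then 1 else 0 := by
  fin_cases a <;> rfl

theorem hammingDist_le {β : Type*} [DecidableEq β] (x y : Fin n → β) : hammingDist x y ≤ n :=
  hammingDist_le_card_fintype.trans_eq (Fintype.card_fin n)

theorem prod_ite_eq_pow_mul_pow {M : Type*} [CommMonoid M] (x y : Fin n → Fin 2) (u v : M) :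
    ∏ i, (if x i = y i then u else v) = u ^ (n - hammingDist x y) * v ^ hammingDist x y := by
  have hsplit := card_filter_add_card_filter_not (s := univ) (fun i => x i ≠ y i)
  simp only [not_not, card_univ, Fintype.card_fin] at hsplit
  rw [prod_ite, prod_const, prod_const, hammingDist]
  congr 2
  omega

theorem prod_toSign_mul_toSign (x y : Fin n → Fin 2) :
    ∏ i, toSign (x i) * toSign (y i) = (-1) ^ hammingDist x y := by
  simp_rw [toSign_mul_toSign, prod_ite_eq_pow_mul_pow, one_pow, one_mul]

theorem parity_mul_parity (x y : Fin n → Fin 2) :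
    parity x * parity y = (-1) ^ hammingDist x y := by
  rw [parity, parity, ← prod_mul_distrib, prod_toSign_mul_toSign]

theorem parity_eq_one_or_neg_one (x : Fin n → Fin 2) : parity x = 1 ∨ parity x = -1 := by
  have hsq := parity_mul_parity x x
  rw [hammingDist_self, pow_zero] at hsq
  exact (Int.eq_one_or_neg_one_of_mul_eq_one' hsq).imp And.left And.left

theorem krawtchoukGen_hammingDist (c : ℤ) (x y : Fin n → Fin 2) :
    krawtchoukGen n c (hammingDist x y) =
      ∑ T ∈ univ.powerset, c ^ #T * ((∏ i ∈ T, toSign (x i)) * ∏ i ∈ T, toSign (y i)) := by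
  have hfactor : ∀ i, 1 + c * (toSign (x i) * toSign (y i)) =
      if x i = y i then 1 + c else 1 - c := fun i => by
    rw [toSign_mul_toSign]; split_ifs <;> ring
  rw [krawtchoukGen, ← prod_ite_eq_pow_mul_pow, ← prod_congr rfl fun i _ => hfactor i,
    prod_one_add]
  simp_rw [prod_mul_distrib, prod_const]

variable {R : Type} [Fintype R]

theorem sum_sum_krawtchoukGen (A : R → Fin n → Fin 2) (c : ℤ) :
    ∑ r, ∑ s, krawtchoukGen n c (hammingDist (A r) (A s)) =
      ∑ T ∈ univ.powerset, c ^ #T * charSum A T ^ 2 := by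
  simp_rw [krawtchoukGen_hammingDist, charSum, sq, sum_mul_sum, mul_sum]
  exact sum_comm_cycle

theorem charSum_univ (A : R → Fin n → Fin 2) : charSum A univ = ∑ r, parity (A r) := rfl

theorem sum_neg_one_pow_hammingDist (A : R → Fin n → Fin 2) (r : R) :
    ∑ s, (-1) ^ hammingDist (A r) (A s) = parity (A r) * charSum A univ := by
  rw [charSum_univ, mul_sum]
  exact sum_congr rfl fun s _ => (parity_mul_parity _ _).symm

theorem even_hammingDist_of_neg_le_parity_mul (A : R → Fin n → Fin 2) {b : ℤ}
    (hb : ∀ r, -b ≤ parity (A r) * charSum A univ) (hlt : b < |charSum A univ|) (r s : R) :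
    Even (hammingDist (A r) (A s)) := by
  refine (neg_one_pow_eq_one_iff_even (R := ℤ) (by decide)).1 ?_
  have hr := hb r
  have hs := hb s
  rw [← parity_mul_parity]
  rcases parity_eq_one_or_neg_one (A r) with h | h <;>
    rcases parity_eq_one_or_neg_one (A s) with h' | h' <;>
    simp only [h, h'] at hr hs ⊢ <;> first | rfl | (rw [lt_abs] at hlt; omega)

end OrthogonalArray

open OrthogonalArray

namespace IsOA

variable {R : Type} [Fintype R] {n t lam : ℕ} {A : R → Fin n → Fin 2}

theorem card_filter_of_card_eq (hA : IsOA t lam A) {S : Finset (Fin n)} (hS : #S = t)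
    (f : Fin n → Fin 2) : #{r | ∀ i ∈ S, A r i = f i} = lam := by
  set e := S.orderIsoOfFin hS
  rw [← hA (fun j => e j) (Subtype.val_injective.comp e.injective) (fun j => f (e j))]
  congr 1
  ext r
  simp only [mem_filter, mem_univ, true_and]
  exact ⟨fun h j => h _ (e j).2, fun h i hi => by simpa using h (e.symm ⟨i, hi⟩)⟩

theorem card_filter_eq_sum_insert (A : R → Fin n → Fin 2) (S : Finset (Fin n))
    (f : Fin n → Fin 2) {j : Fin n} (hj : j ∉ S) :
    #{r | ∀ i ∈ S, A r i = f i} =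
      ∑ b : Fin 2, #{r | ∀ i ∈ insert j S, A r i = Function.update f j b i} := by
  rw [card_eq_sum_card_fiberwise (f := fun r => A r j) (t := univ) (fun _ _ => mem_univ _)]
  refine sum_congr rfl fun b _ => congrArg card ?_
  rw [filter_filter]
  refine filter_congr fun r _ => ?_
  rw [forall_mem_insert, Function.update_self, and_comm]
  refine and_congr_right fun _ => forall₂_congr fun i hi => ?_
  rw [Function.update_of_ne (ne_of_mem_of_not_mem hi hj)]

theorem card_filter_eq (hA : IsOA t lam A) (htn : t ≤ n) {S : Finset (Fin n)} (hS : #S ≤ t)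
    (f : Fin n → Fin 2) : #{r | ∀ i ∈ S, A r i = f i} = lam * 2 ^ (t - #S) := by
  induction hk : t - #S generalizing S f with
  | zero => simpa using hA.card_filter_of_card_eq (by omega) f
  | succ k ih =>
    obtain ⟨j, hj⟩ : ∃ j, j ∉ S := by
      by_contra! h
      have := card_le_card (fun i _ => h i : (univ : Finset (Fin n)) ⊆ S)
      rw [card_univ, Fintype.card_fin] at this
      omega
    have hcard := card_insert_of_notMem hj
    rw [card_filter_eq_sum_insert A S f hj]
    simp only [ih (S := insert j S) (by omega) _ (by omega), sum_const, card_univ,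
      Fintype.card_fin, smul_eq_mul]
    ring

theorem charSum_eq_zero (hA : IsOA t lam A) (htn : t ≤ n) {S : Finset (Fin n)}
    (hne : S.Nonempty) (hS : #S ≤ t) : charSum A S = 0 := by
  have hT : ∀ T ∈ S.powerset,
      ∑ r, ∏ i ∈ T, (-2 * if A r i = 1 then 1 else 0 : ℤ) = lam * 2 ^ t * (-1) ^ #T := by
    intro T hT
    have hTt : #T ≤ t := (card_le_card (mem_powerset.1 hT)).trans hS
    have hind : ∀ r, ∏ i ∈ T, (if A r i = 1 then 1 else 0 : ℤ) =
        if ∀ i ∈ T, A r i = 1 then 1 else 0 := fun r => by convert prod_boole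
    simp_rw [prod_mul_distrib, prod_const, hind, ← mul_sum, sum_boole,
      hA.card_filter_eq htn hTt (fun _ => 1)]
    obtain ⟨u, rfl⟩ := Nat.exists_eq_add_of_le hTt
    rw [Nat.add_sub_cancel_left, neg_pow, pow_add]
    push_cast
    ring
  calc charSum A S
      = ∑ r, ∑ T ∈ S.powerset, ∏ i ∈ T, (-2 * if A r i = 1 then 1 else 0 : ℤ) := by
        simp_rw [charSum, toSign_eq_one_add, prod_one_add]
    _ = ∑ T ∈ S.powerset, (lam * 2 ^ t * (-1) ^ #T : ℤ) := by
        rw [sum_comm]; exact sum_congr rfl hT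
    _ = 0 := by rw [← mul_sum, sum_powerset_neg_one_pow_card_of_nonempty hne, mul_zero]

theorem sum_choose_hammingDist (hA : IsOA t lam A) (htn : t ≤ n) (r : R) {k : ℕ} (hk : k ≤ t) :
    ∑ s, (hammingDist (A r) (A s)).choose k = n.choose k * (lam * 2 ^ (t - k)) := by
  have hflip : ∀ a b : Fin 2, a ≠ b ↔ b = a + 1 := by decide
  have hchoose : ∀ s, (hammingDist (A r) (A s)).choose k =
      #{T ∈ powersetCard k univ | ∀ i ∈ T, A s i = A r i + 1} := by
    intro s
    rw [hammingDist, ← card_powersetCard]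
    congr 1
    ext T
    simp [mem_powersetCard, subset_iff, hflip, and_comm]
  calc ∑ s, (hammingDist (A r) (A s)).choose k
      = ∑ T ∈ powersetCard k univ, #{s | ∀ i ∈ T, A s i = A r i + 1} := by
        simp_rw [hchoose, card_filter]
        exact sum_comm
    _ = ∑ T ∈ powersetCard k (univ : Finset (Fin n)), lam * 2 ^ (t - k) :=
        sum_congr rfl fun T hT => by
          rw [← (mem_powersetCard.1 hT).2]
          exact hA.card_filter_eq htn ((mem_powersetCard.1 hT).2 ▸ hk) _
    _ = n.choose k * (lam * 2 ^ (t - k)) := by simp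

theorem sum_binomialSum_hammingDist (hA : IsOA t lam A) (htn : t ≤ n) (r : R) {m : ℕ}
    (a : Fin m → ℤ) (hm : m ≤ t + 1) :
    ∑ s, binomialSum a (hammingDist (A r) (A s)) =
      ∑ k : Fin m, a k * (n.choose k * (lam * 2 ^ (t - k)) : ℕ) := by
  simp_rw [binomialSum]
  rw [sum_comm]
  refine sum_congr rfl fun k _ => ?_
  rw [← mul_sum, ← hA.sum_choose_hammingDist htn r (by omega)]
  push_cast
  rfl

theorem mul_charSum_univ_sq_le (hA : IsOA t lam A) (htn : t ≤ n) {m : ℕ} (c x : Fin m → ℤ)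
    (hc : ∀ k < n, (k = 0 ∨ t < k) → 0 ≤ ∑ j, c j * x j ^ k) :
    (∑ j, c j * x j ^ n) * charSum A univ ^ 2 ≤
      ∑ r, ∑ s, ∑ j, c j * krawtchoukGen n (x j) (hammingDist (A r) (A s)) := by
  have hexpand : ∑ r, ∑ s, ∑ j, c j * krawtchoukGen n (x j) (hammingDist (A r) (A s)) =
      ∑ T ∈ univ.powerset, (∑ j, c j * x j ^ #T) * charSum A T ^ 2 := by
    rw [sum_comm_cycle]
    simp_rw [← mul_sum, sum_sum_krawtchoukGen, mul_sum, sum_mul, mul_assoc]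
    exact sum_comm
  rw [hexpand, ← add_sum_erase _ _ (mem_powerset.2 (subset_refl univ)), card_univ,
    Fintype.card_fin]
  refine le_add_of_nonneg_right (sum_nonneg fun T hT => ?_)
  have hTn : #T < n := by
    simpa using card_lt_card (ssubset_univ_iff.2 (ne_of_mem_erase hT))
  by_cases hsmall : T.Nonempty ∧ #T ≤ t
  · rw [hA.charSum_eq_zero htn hsmall.1 hsmall.2]
    simp
  · refine mul_nonneg (hc _ hTn ?_) (sq_nonneg _)
    rw [not_and_or, not_nonempty_iff_eq_empty, not_le] at hsmall
    exact hsmall.imp (fun h => by simp [h]) id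

end IsOA

namespace OA96_11

/- Dual certificate for Delsarte's bound: `∑ j, lpWeights j * krawtchoukGen 11 (lpNodes j) w`
has Krawtchouk coefficients `∑ j, lpWeights j * lpNodes j ^ k`, which vanish for
`k ∈ {0, 5, 6, 9, 10}` and are positive for `k ∈ {7, 8}`. -/
def lpWeights : Fin 8 → ℤ :=
  ![-1252873216, 1275305472, 41774880, -67062688, -748032, 3747840, -4807, -139449]

def lpNodes : Fin 8 → ℤ := ![1, -1, 2, -2, 3, -3, 4, -4]

def lpMajorant : Fin 5 → ℤ :=
  ![7280068262040, -4196118664080, 2070870520320, -790297482240, 178455674880]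

def parityMinorant : Fin 5 → ℤ := ![-635, 374, -188, 72, -16]

def evenTest : Fin 5 → ℤ := ![1920, -975, 414, -132, 24]

variable {A : Fin 96 → Fin 11 → Fin 2}

theorem sq_charSum_univ_ge (hA : IsOA 4 6 A) : 3072 ≤ charSum A univ ^ 2 := by
  have hmaj : ∀ w ≤ 11,
      ∑ j, lpWeights j * krawtchoukGen 11 (lpNodes j) w ≤ binomialSum lpMajorant w := by
    decide
  have hrow : ∀ r, ∑ s, ∑ j, lpWeights j *
      krawtchoukGen 11 (lpNodes j) (hammingDist (A r) (A s)) ≤ -362547118080 := by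
    intro r
    have h := sum_add_sub_le_sum_of_le
      (f := fun s => ∑ j, lpWeights j * krawtchoukGen 11 (lpNodes j) (hammingDist (A r) (A s)))
      (g := fun s => binomialSum lpMajorant (hammingDist (A r) (A s)))
      (fun s => hmaj _ (hammingDist_le _ _)) r
    rw [hammingDist_self, hA.sum_binomialSum_hammingDist (by norm_num) r _ (by norm_num)] at h
    have hgap : binomialSum lpMajorant 0 -
        ∑ j, lpWeights j * krawtchoukGen 11 (lpNodes j) 0 = 5800753889280 := by decide
    have hmoment : ∑ k : Fin 5, lpMajorant k * (Nat.choose 11 k * (6 * 2 ^ (4 - (k : ℕ))) : ℕ) =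
        5438206771200 := by decide
    linarith
  have hlow := hA.mul_charSum_univ_sq_le (by norm_num) lpWeights lpNodes (by decide)
  have htop : ∑ j, lpWeights j * lpNodes j ^ 11 = -11329597440 := by decide
  have hsum := sum_le_sum fun r (_ : r ∈ univ) => hrow r
  rw [sum_const, card_univ, Fintype.card_fin, nsmul_eq_mul, Nat.cast_ofNat] at hsum
  rw [htop] at hlow
  linarith

theorem neg_le_parity_mul_charSum (hA : IsOA 4 6 A) (r : Fin 96) :
    -25 ≤ parity (A r) * charSum A univ := by
  have hmin : ∀ w ≤ 11, binomialSum parityMinorant w ≤ 5 * (-1) ^ w := by decide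
  have h := sum_add_sub_le_sum_of_le
    (f := fun s => binomialSum parityMinorant (hammingDist (A r) (A s)))
    (g := fun s => 5 * (-1) ^ hammingDist (A r) (A s))
    (fun s => hmin _ (hammingDist_le _ _)) r
  rw [hammingDist_self, ← mul_sum, sum_neg_one_pow_hammingDist,
    hA.sum_binomialSum_hammingDist (by norm_num) r _ (by norm_num)] at h
  have hgap : 5 * (-1) ^ 0 - binomialSum parityMinorant 0 = 640 := by decide
  have hmoment : ∑ k : Fin 5, parityMinorant k * (Nat.choose 11 k * (6 * 2 ^ (4 - (k : ℕ))) : ℕ) =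
      -768 := by decide
  rw [hgap, hmoment] at h
  generalize parity (A r) * charSum A univ = x at h ⊢
  omega

theorem not_forall_even_hammingDist (hA : IsOA 4 6 A) (r : Fin 96) :
    ¬ ∀ s, Even (hammingDist (A r) (A s)) := by
  intro heven
  have hdvd : ∀ w ≤ 11, Even w → 384 ∣ binomialSum evenTest w := by decide
  have h := dvd_sum fun s (_ : s ∈ univ) => hdvd _ (hammingDist_le _ _) (heven s)
  rw [hA.sum_binomialSum_hammingDist (by norm_num) r _ (by norm_num)] at h
  revert h
  decide

end OA96_11

open OA96_11

theorem no_OA_96_11 : ¬ ∃ A : Fin 96 → Fin 11 → Fin 2, IsOA 4 6 A := by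
  rintro ⟨A, hA⟩
  have hlarge : 25 < |charSum A univ| := by
    nlinarith [sq_charSum_univ_ge hA, sq_abs (charSum A univ), abs_nonneg (charSum A univ)]
  exact not_forall_even_hammingDist hA 0
    (even_hammingDist_of_neg_le_parity_mul A (neg_le_parity_mul_charSum hA) hlarge 0)
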